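/- Fix μ ∈ (0,1) and real numbers c, g with c < −1 and c + g + 2 < 0. Then cx² + 2x + g < 0 for every real x ≥ 1, and consequently there is no point (ξ, η, p_ξ, p_η) ∈ ℝ⁴ with ξ ≥ 1 and ξ² ≠ η² satisfying H(ξ, η, p_ξ, p_η) = c and G(ξ, η, p_ξ, p_η) = g, where H = (2(ξ²−1)p_ξ² − 2ξ + 2(1−η²)p_η² + 2(1−2μ)η)/(ξ²−η²) and G = −(η²(2(ξ²−1)p_ξ² − 2ξ) + ξ²(2(1−η²)p_η² + 2(1−2μ)η))/(ξ²−η²). In other words, the region with c < −1 lying below the line c = −g − 2 is not classically accessible. -/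
import Mathlib


/-- The Hamiltonian of the Euler problem in elliptic coordinates. -/
noncomputable def eulerH (μ ξ η pξ pη : ℝ) : ℝ :=
  (2 * (ξ ^ 2 - 1) * pξ ^ 2 - 2 * ξ + (2 * (1 - η ^ 2) * pη ^ 2 + 2 * (1 - 2 * μ) * η)) /
    (ξ ^ 2 - η ^ 2)

/-- The Strand–Reinhardt first integral of the Euler problem. -/
noncomputable def eulerG (μ ξ η pξ pη : ℝ) : ℝ :=
  -(η ^ 2 * (2 * (ξ ^ 2 - 1) * pξ ^ 2 - 2 * ξ) +
      ξ ^ 2 * (2 * (1 - η ^ 2) * pη ^ 2 + 2 * (1 - 2 * μ) * η)) /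
    (ξ ^ 2 - η ^ 2)

/-- For μ ∈ (0,1), c < -1 and c + g + 2 < 0 we have cx² + 2x + g < 0 for all x ≥ 1,
and consequently no point (ξ, η, p_ξ, p_η) with ξ ≥ 1 and ξ² ≠ η² satisfies H = c
and G = g: the region with c < -1 below the line c = -g - 2 is not classically
accessible. -/
theorem euler_region_below_line_inaccessible (μ c g : ℝ) (hμ0 : 0 < μ) (hμ1 : μ < 1)
    (hc : c < -1) (hcg : c + g + 2 < 0) :
    (∀ x : ℝ, 1 ≤ x → c * x ^ 2 + 2 * x + g < 0) ∧
    ¬ ∃ ξ η pξ pη : ℝ, 1 ≤ ξ ∧ ξ ^ 2 ≠ η ^ 2 ∧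
      eulerH μ ξ η pξ pη = c ∧ eulerG μ ξ η pξ pη = g := by
  have h1 : ∀ x : ℝ, 1 ≤ x → c * x ^ 2 + 2 * x + g < 0 := by
    intro x hx
    nlinarith [mul_nonneg (sub_nonneg.2 hx) (sub_nonneg.2 hx)]
  refine ⟨h1, ?_⟩
  rintro ⟨ξ, η, pξ, pη, hξ, hne, hH, hG⟩
  have hden : ξ ^ 2 - η ^ 2 ≠ 0 := sub_ne_zero.2 hne
  unfold eulerH at hH
  unfold eulerG at hG
  rw [div_eq_iff hden] at hH
  rw [div_eq_iff hden] at hG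
  have e1 : (ξ ^ 2 - η ^ 2) * ((2 * (ξ ^ 2 - 1) * pξ ^ 2 - 2 * ξ) - (c * ξ ^ 2 + g)) = 0 := by
    linear_combination ξ ^ 2 * hH + hG
  have key : 2 * (ξ ^ 2 - 1) * pξ ^ 2 - 2 * ξ = c * ξ ^ 2 + g := by
    rcases mul_eq_zero.1 e1 with h | h
    · exact absurd h hden
    · linarith
  have hx := h1 ξ hξ
  nlinarith [mul_nonneg (by nlinarith : (0:ℝ) ≤ ξ ^ 2 - 1) (sq_nonneg pξ)]
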